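/- Let G1=(V1,E1,ℓ1), G2=(V2,E2,ℓ2), G3=(V3,E3,ℓ3) be finite acyclic labeled graphs with single-character vertex labels, and let v1∈V1, v2∈V2, v3∈V3 with ℓ1(v1)=ℓ2(v2)=ℓ3(v3). If v1 and v2 each have at least one in-coming edge and v3 has no in-coming edges, then D(v1,v2,v3) = 1 + max{ L(u1,u2) : (u1,v1)∈E1, (u2,v2)∈E2 }. -/

import Mathlib

open List Relation

section Defs

variable {V V1 V2 V3 α : Type*}

/-- A (directed) path: a nonempty list of vertices, consecutive ones joined by edges. -/
def IsPath (E : V → V → Prop) (p : List V) : Prop :=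
  p ≠ [] ∧ p.Chain' E

/-- Paths ending at `v` (the set `P(v)`). -/
def EndsAt (E : V → V → Prop) (v : V) (p : List V) : Prop :=
  IsPath E p ∧ p.getLast? = some v

/-- A path is left-maximal if its first vertex has no in-coming edges. -/
def LeftMax (E : V → V → Prop) (p : List V) : Prop :=
  ∀ w u, p.head? = some w → ¬ E u w

/-- A path is right-maximal if its last vertex has no out-going edges. -/
def RightMax (E : V → V → Prop) (p : List V) : Prop :=
  ∀ w u, p.getLast? = some w → ¬ E w u

/-- `Subseq(ℓ(P(v)))`: subsequences of label strings of paths ending at `v`. -/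
def SubseqAt (E : V → V → Prop) (ℓ : V → α) (v : V) : Set (List α) :=
  {z | ∃ p, EndsAt E v p ∧ z.Sublist (p.map ℓ)}

/-- `Subseq(ℓ(LMP(v)))`: subsequences of label strings of left-maximal paths ending at `v`. -/
def SubseqLM (E : V → V → Prop) (ℓ : V → α) (v : V) : Set (List α) :=
  {z | ∃ p, EndsAt E v p ∧ LeftMax E p ∧ z.Sublist (p.map ℓ)}

/-- `Subseq(G)`: subsequences of label strings of all paths of `G`. -/
def SubseqG (E : V → V → Prop) (ℓ : V → α) : Set (List α) :=
  {z | ∃ p, IsPath E p ∧ z.Sublist (p.map ℓ)}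

/-- A graph is acyclic if no vertex lies on a nonempty cycle. -/
def Acyclic (E : V → V → Prop) : Prop :=
  ∀ v, ¬ Relation.TransGen E v v

/-- The set `S_IC(v1,v2,v3)`. -/
def SIC (E1 : V1 → V1 → Prop) (ℓ1 : V1 → α) (E2 : V2 → V2 → Prop) (ℓ2 : V2 → α)
    (E3 : V3 → V3 → Prop) (ℓ3 : V3 → α) (v1 : V1) (v2 : V2) (v3 : V3) :
    Set (List α) :=
  {z | (∃ q, EndsAt E3 v3 q ∧ LeftMax E3 q ∧ (q.map ℓ3).Sublist z) ∧
       z ∈ SubseqAt E1 ℓ1 v1 ∧ z ∈ SubseqAt E2 ℓ2 v2}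

/-- Maximum length of a string in `S`, with `⊥` (= −∞) for `S = ∅`. -/
noncomputable def maxLen (S : Set (List α)) : WithBot ℕ :=
  sSup ((fun z : List α => (z.length : WithBot ℕ)) '' S)

/-- `L(v1,v2)`: the maximum length of a common subsequence (as a natural number). -/
noncomputable def Lval (E1 : V1 → V1 → Prop) (ℓ1 : V1 → α)
    (E2 : V2 → V2 → Prop) (ℓ2 : V2 → α) (v1 : V1) (v2 : V2) : ℕ :=
  sSup {n | ∃ z ∈ SubseqAt E1 ℓ1 v1 ∩ SubseqAt E2 ℓ2 v2, n = z.length}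

/-- `D(v1,v2,v3)`: the maximum length of a string in `S_IC(v1,v2,v3)`, `−∞` if empty. -/
noncomputable def Dval (E1 : V1 → V1 → Prop) (ℓ1 : V1 → α) (E2 : V2 → V2 → Prop) (ℓ2 : V2 → α)
    (E3 : V3 → V3 → Prop) (ℓ3 : V3 → α) (v1 : V1) (v2 : V2) (v3 : V3) : WithBot ℕ :=
  maxLen (SIC E1 ℓ1 E2 ℓ2 E3 ℓ3 v1 v2 v3)

end Defs

/-!
As `v3` has no in-coming edges, `[v3]` is a left-maximal path ending at `v3`, so appending the
common label `ℓ1 v1` to a longest common subsequence at a pair of predecessors `(u1, u2)` gives a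
member of `S_IC` of length `1 + L(u1, u2)`. Conversely, in a path ending at `v` the vertex `v`
can contribute only the last letter of a subsequence, so a common subsequence at `(v1, v2)` of
length at least two loses its last letter to a common subsequence at some pair of predecessors.
-/

theorem List.Sublist.dropLast {α : Type*} {l₁ l₂ : List α} (h : l₁ <+ l₂) :
    l₁.dropLast <+ l₂.dropLast := by
  simpa [List.tail_reverse] using h.reverse.tail.reverse

section Paths

variable {V α : Type*} {E : V → V → Prop} {ℓ : V → α}

theorem Acyclic.nodup_of_isChain (hE : Acyclic E) {p : List V} (hp : p.IsChain E) :
    p.Nodup := by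
  have : IsTrans V (TransGen E) := ⟨fun _ _ _ => TransGen.trans⟩
  refine (List.isChain_iff_pairwise.mp (hp.imp fun _ _ => TransGen.single)).imp ?_
  rintro a b hab rfl
  exact hE a hab

theorem Acyclic.length_le_card_of_mem_subseqAt [Fintype V] (hE : Acyclic E) {v : V}
    {z : List α} (hz : z ∈ SubseqAt E ℓ v) : z.length ≤ Fintype.card V := by
  obtain ⟨p, hp, hzp⟩ := hz
  calc z.length ≤ (p.map ℓ).length := hzp.length_le
    _ = p.length := List.length_map _
    _ ≤ Fintype.card V := (hE.nodup_of_isChain hp.1.2).length_le_card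

theorem endsAt_singleton (v : V) : EndsAt E v [v] :=
  ⟨⟨List.cons_ne_nil v [], List.isChain_singleton v⟩, rfl⟩

theorem leftMax_singleton {v : V} (hv : ∀ u, ¬ E u v) : LeftMax E [v] := by
  rintro w u ⟨⟩
  exact hv u

theorem EndsAt.concat {u v : V} {p : List V} (hp : EndsAt E u p) (huv : E u v) :
    EndsAt E v (p ++ [v]) := by
  refine ⟨⟨by simp, List.isChain_append.mpr ⟨hp.1.2, List.isChain_singleton v, ?_⟩⟩,
    List.getLast?_concat⟩
  rw [hp.2]
  rintro x ⟨⟩ y ⟨⟩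
  exact huv

theorem EndsAt.eq_singleton_or_concat {v : V} {p : List V} (hp : EndsAt E v p) :
    p = [v] ∨ ∃ u q, E u v ∧ EndsAt E u q ∧ p = q ++ [v] := by
  obtain ⟨⟨hne, hchain⟩, hlast⟩ := hp
  obtain ⟨q, rfl⟩ : ∃ q, p = q ++ [v] := by
    obtain ⟨q, b, rfl⟩ := (List.eq_nil_or_concat p).resolve_left hne
    simp only [List.concat_eq_append, List.getLast?_concat, Option.some.injEq] at hlast
    exact ⟨q, by rw [hlast, List.concat_eq_append]⟩
  rcases List.eq_nil_or_concat q with rfl | ⟨q', u, rfl⟩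
  · exact .inl rfl
  · rw [List.concat_eq_append, List.append_assoc, List.singleton_append] at hchain ⊢
    obtain ⟨hq, huv, -⟩ := List.isChain_append_cons_cons.mp hchain
    exact .inr ⟨u, q' ++ [u], huv, ⟨⟨by simp, hq⟩, List.getLast?_concat⟩, by simp⟩

theorem nil_mem_subseqAt (v : V) : ([] : List α) ∈ SubseqAt E ℓ v :=
  ⟨[v], endsAt_singleton v, List.nil_sublist _⟩

theorem concat_mem_subseqAt {u v : V} {z : List α} (hz : z ∈ SubseqAt E ℓ u) (huv : E u v) :
    z ++ [ℓ v] ∈ SubseqAt E ℓ v := by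
  obtain ⟨p, hp, hzp⟩ := hz
  exact ⟨p ++ [v], hp.concat huv, by simpa using hzp.append_right [ℓ v]⟩

theorem exists_dropLast_mem_subseqAt {v : V} {z : List α} (hz : z ∈ SubseqAt E ℓ v)
    (hlen : 1 < z.length) : ∃ u, E u v ∧ z.dropLast ∈ SubseqAt E ℓ u := by
  obtain ⟨p, hp, hzp⟩ := hz
  rcases hp.eq_singleton_or_concat with rfl | ⟨u, q, huv, hq, rfl⟩
  · have : z.length ≤ 1 := by simpa using hzp.length_le
    omega
  · exact ⟨u, huv, q, hq, by simpa using hzp.dropLast⟩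

end Paths

section CommonSubseq

variable {V1 V2 V3 α : Type*} {E1 : V1 → V1 → Prop} {ℓ1 : V1 → α}
  {E2 : V2 → V2 → Prop} {ℓ2 : V2 → α} {E3 : V3 → V3 → Prop} {ℓ3 : V3 → α}

theorem isGreatest_Lval [Fintype V1] (h1 : Acyclic E1) (u1 : V1) (u2 : V2) :
    IsGreatest {n | ∃ z ∈ SubseqAt E1 ℓ1 u1 ∩ SubseqAt E2 ℓ2 u2, n = z.length}
      (Lval E1 ℓ1 E2 ℓ2 u1 u2) := by
  have hne : {n | ∃ z ∈ SubseqAt E1 ℓ1 u1 ∩ SubseqAt E2 ℓ2 u2, n = z.length}.Nonempty :=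
    ⟨0, [], ⟨nil_mem_subseqAt u1, nil_mem_subseqAt u2⟩, rfl⟩
  have hbdd : BddAbove {n | ∃ z ∈ SubseqAt E1 ℓ1 u1 ∩ SubseqAt E2 ℓ2 u2, n = z.length} := by
    refine ⟨Fintype.card V1, ?_⟩
    rintro _ ⟨z, ⟨hz1, -⟩, rfl⟩
    exact h1.length_le_card_of_mem_subseqAt hz1
  exact ⟨Nat.sSup_mem hne hbdd, fun _ hn => le_csSup hbdd hn⟩

theorem Lval_le_card [Fintype V1] (h1 : Acyclic E1) (u1 : V1) (u2 : V2) :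
    Lval E1 ℓ1 E2 ℓ2 u1 u2 ≤ Fintype.card V1 := by
  obtain ⟨z, ⟨hz1, -⟩, hz⟩ := (isGreatest_Lval (E2 := E2) (ℓ2 := ℓ2) h1 u1 u2).1
  exact hz ▸ h1.length_le_card_of_mem_subseqAt hz1

theorem length_le_of_forall_Lval_le [Fintype V1] (h1 : Acyclic E1) {v1 : V1} {v2 : V2} {N : ℕ}
    (hN : ∀ u1 u2, E1 u1 v1 → E2 u2 v2 → Lval E1 ℓ1 E2 ℓ2 u1 u2 ≤ N) {z : List α}
    (hz1 : z ∈ SubseqAt E1 ℓ1 v1) (hz2 : z ∈ SubseqAt E2 ℓ2 v2) : z.length ≤ N + 1 := by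
  by_contra! hlen
  obtain ⟨u1, hu1, hd1⟩ := exists_dropLast_mem_subseqAt hz1 (by omega)
  obtain ⟨u2, hu2, hd2⟩ := exists_dropLast_mem_subseqAt hz2 (by omega)
  have hL : z.dropLast.length ≤ Lval E1 ℓ1 E2 ℓ2 u1 u2 :=
    (isGreatest_Lval h1 u1 u2).2 ⟨_, ⟨hd1, hd2⟩, rfl⟩
  have := hN u1 u2 hu1 hu2
  rw [List.length_dropLast] at hL
  omega

theorem concat_mem_SIC {u1 v1 : V1} {u2 v2 : V2} {v3 : V3}
    (hl12 : ℓ1 v1 = ℓ2 v2) (hl31 : ℓ3 v3 = ℓ1 v1) (hv3 : ∀ u, ¬ E3 u v3)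
    (hu1 : E1 u1 v1) (hu2 : E2 u2 v2) {z : List α}
    (hz1 : z ∈ SubseqAt E1 ℓ1 u1) (hz2 : z ∈ SubseqAt E2 ℓ2 u2) :
    z ++ [ℓ1 v1] ∈ SIC E1 ℓ1 E2 ℓ2 E3 ℓ3 v1 v2 v3 :=
  ⟨⟨[v3], endsAt_singleton v3, leftMax_singleton hv3,
      by simp [hl31]⟩,
    concat_mem_subseqAt hz1 hu1, hl12 ▸ concat_mem_subseqAt hz2 hu2⟩

end CommonSubseq

theorem stmt9_general {V1 V2 V3 α : Type*} [Fintype V1]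
    (E1 : V1 → V1 → Prop) (ℓ1 : V1 → α) (E2 : V2 → V2 → Prop) (ℓ2 : V2 → α)
    (E3 : V3 → V3 → Prop) (ℓ3 : V3 → α)
    (h1 : Acyclic E1)
    (v1 : V1) (v2 : V2) (v3 : V3)
    (hl12 : ℓ1 v1 = ℓ2 v2) (hl23 : ℓ2 v2 = ℓ3 v3)
    (hv1 : ∃ u, E1 u v1) (hv2 : ∃ u, E2 u v2) (hv3 : ∀ u, ¬ E3 u v3) :
    Dval E1 ℓ1 E2 ℓ2 E3 ℓ3 v1 v2 v3 =
      1 + sSup {d : WithBot ℕ | ∃ u1 u2, E1 u1 v1 ∧ E2 u2 v2 ∧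
        d = (Lval E1 ℓ1 E2 ℓ2 u1 u2 : ℕ)} := by
  obtain ⟨w1, hw1⟩ := hv1
  obtain ⟨w2, hw2⟩ := hv2
  obtain ⟨_, ⟨a1, a2, ha1, ha2, rfl⟩, hmax⟩ : ∃ N, IsGreatest
      {n | ∃ u1 u2, E1 u1 v1 ∧ E2 u2 v2 ∧ n = Lval E1 ℓ1 E2 ℓ2 u1 u2} N :=
    BddAbove.exists_isGreatest_of_nonempty
      ⟨Fintype.card V1, by rintro _ ⟨u1, u2, -, -, rfl⟩; exact Lval_le_card h1 u1 u2⟩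
      ⟨_, w1, w2, hw1, hw2, rfl⟩
  have hN : ∀ u1 u2, E1 u1 v1 → E2 u2 v2 → Lval E1 ℓ1 E2 ℓ2 u1 u2 ≤ Lval E1 ℓ1 E2 ℓ2 a1 a2 :=
    fun u1 u2 hu1 hu2 => hmax ⟨u1, u2, hu1, hu2, rfl⟩
  obtain ⟨z, ⟨hz1, hz2⟩, hz⟩ := (isGreatest_Lval h1 a1 a2).1
  have hD : IsGreatest ((fun z : List α => (z.length : WithBot ℕ)) ''
      SIC E1 ℓ1 E2 ℓ2 E3 ℓ3 v1 v2 v3) ((Lval E1 ℓ1 E2 ℓ2 a1 a2 + 1 : ℕ) : WithBot ℕ) := by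
    refine ⟨⟨z ++ [ℓ1 v1], concat_mem_SIC hl12 (hl12.trans hl23).symm hv3 ha1 ha2 hz1 hz2,
      by simp [hz]⟩, ?_⟩
    rintro _ ⟨y, ⟨-, hy1, hy2⟩, rfl⟩
    exact WithBot.coe_le_coe.mpr (length_le_of_forall_Lval_le h1 hN hy1 hy2)
  have hR : IsGreatest {d : WithBot ℕ | ∃ u1 u2, E1 u1 v1 ∧ E2 u2 v2 ∧
      d = (Lval E1 ℓ1 E2 ℓ2 u1 u2 : ℕ)} (Lval E1 ℓ1 E2 ℓ2 a1 a2 : ℕ) := by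
    refine ⟨⟨a1, a2, ha1, ha2, rfl⟩, ?_⟩
    rintro _ ⟨u1, u2, hu1, hu2, rfl⟩
    exact WithBot.coe_le_coe.mpr (hN u1 u2 hu1 hu2)
  rw [Dval, maxLen, hD.csSup_eq, hR.csSup_eq, add_comm]
  rfl

/-- In finite acyclic graphs with `ℓ1(v1) = ℓ2(v2) = ℓ3(v3)`:
if `v1` and `v2` each have an in-coming edge and `v3` has none, then
`D(v1,v2,v3) = 1 + max{ L(u1,u2) : (u1,v1) ∈ E1, (u2,v2) ∈ E2 }`. -/
theorem stmt9 {V1 V2 V3 α : Type*} [Fintype V1] [Fintype V2] [Fintype V3]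
    (E1 : V1 → V1 → Prop) (ℓ1 : V1 → α) (E2 : V2 → V2 → Prop) (ℓ2 : V2 → α)
    (E3 : V3 → V3 → Prop) (ℓ3 : V3 → α)
    (h1 : Acyclic E1) (h2 : Acyclic E2) (h3 : Acyclic E3)
    (v1 : V1) (v2 : V2) (v3 : V3)
    (hl12 : ℓ1 v1 = ℓ2 v2) (hl23 : ℓ2 v2 = ℓ3 v3)
    (hv1 : ∃ u, E1 u v1) (hv2 : ∃ u, E2 u v2) (hv3 : ∀ u, ¬ E3 u v3) :
    Dval E1 ℓ1 E2 ℓ2 E3 ℓ3 v1 v2 v3 =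
      1 + sSup {d : WithBot ℕ | ∃ u1 u2, E1 u1 v1 ∧ E2 u2 v2 ∧
        d = (Lval E1 ℓ1 E2 ℓ2 u1 u2 : ℕ)} :=
  stmt9_general E1 ℓ1 E2 ℓ2 E3 ℓ3 h1 v1 v2 v3 hl12 hl23 hv1 hv2 hv3
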